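/- Let ψ ∈ ℝⁿ be fixed, let f : ℝ → ℝⁿ be continuously differentiable, and let L : ℝⁿ × ℝ → ℝ be a meta-objective depending both on the agent parameter and explicitly on the hyper-parameter. Assume the composite map g : ℝ → ℝ, g(η) = L(ψ + f(η), η), is twice differentiable with globally bounded second derivative, and that L is continuously differentiable in both arguments. Then lim_{σ → 0⁺} (1/σ) ∫_ℝ g(μ + σ·ε) · ε dγ(ε) = ⟪∇_ψ L(ψ + f(μ), μ), f′(μ)⟫ + ∂_η L(ψ + f(μ), μ), where γ is the standard Gaussian measure on ℝ and ⟪·,·⟫ is the Euclidean inner product on ℝⁿ. (General form of Proposition 1 before imposing that the meta-objective does not explicitly depend on the meta-parameter.) -/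

import Mathlib

/-!
Write `g(μ + σε) = g(μ) + σ g'(μ) ε + r_σ(ε)`. The bounded second derivative gives
`|r_σ(ε)| ≤ M σ² ε²`, and against the standard Gaussian `E[ε] = 0`, `E[ε²] = 1`, so
`(1/σ) E[g(μ + σε) ε] - g'(μ) = (1/σ) E[r_σ(ε) ε] = O(σ E|ε|³) → 0`.
The chain rule along the curve `η ↦ (ψ + f η, η)` splits `g'(μ)` into the two partial derivatives.
-/

open MeasureTheory ProbabilityTheory Filter Real Set
open scoped RealInnerProductSpace Topology

lemma abs_sub_sub_deriv_mul_le_of_abs_deriv_deriv_le {g : ℝ → ℝ} (hg1 : Differentiable ℝ g)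
    (hg2 : Differentiable ℝ (deriv g)) {M : ℝ} (hM : ∀ x, |deriv (deriv g) x| ≤ M) (x y : ℝ) :
    |g y - g x - deriv g x * (y - x)| ≤ M * (y - x) ^ 2 := by
  have hlip : ∀ t, |deriv g t - deriv g x| ≤ M * |t - x| := fun t => by
    simpa only [Real.norm_eq_abs] using convex_univ.norm_image_sub_le_of_norm_deriv_le
      (fun z _ => hg2 z) (fun z _ => hM z) (mem_univ x) (mem_univ t)
  have hderiv : ∀ t ∈ uIcc x y, HasDerivWithinAt (fun t => g t - deriv g x * t)
      (deriv g t - deriv g x) (uIcc x y) t := fun t _ => by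
    have h := (hg1 t).hasDerivAt.sub ((hasDerivAt_id t).const_mul (deriv g x))
    rw [mul_one] at h
    exact h.hasDerivWithinAt
  have hbound : ∀ t ∈ uIcc x y, ‖deriv g t - deriv g x‖ ≤ M * |y - x| := fun t ht =>
    (hlip t).trans (mul_le_mul_of_nonneg_left (abs_sub_left_of_mem_uIcc ht)
      ((abs_nonneg _).trans (hM x)))
  calc |g y - g x - deriv g x * (y - x)|
      = ‖(g y - deriv g x * y) - (g x - deriv g x * x)‖ := by rw [Real.norm_eq_abs]; ring_nf
    _ ≤ M * |y - x| * ‖y - x‖ := (convex_uIcc x y).norm_image_sub_le_of_norm_hasDerivWithin_le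
        hderiv hbound left_mem_uIcc right_mem_uIcc
    _ = M * (y - x) ^ 2 := by rw [Real.norm_eq_abs, mul_assoc, ← sq, sq_abs]

lemma deriv_comp_prodMk_eq_inner_gradient_add {E : Type*} [NormedAddCommGroup E]
    [InnerProductSpace ℝ E] [CompleteSpace E] {L : E → ℝ → ℝ} {c : ℝ → E} {μ : ℝ}
    (hL : DifferentiableAt ℝ (fun p : E × ℝ => L p.1 p.2) (c μ, μ))
    (hc : DifferentiableAt ℝ c μ) :
    deriv (fun η => L (c η) η) μ
      = ⟪gradient (fun x => L x μ) (c μ), deriv c μ⟫ + deriv (fun η => L (c μ) η) μ := by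
  set φ := fderiv ℝ (fun p : E × ℝ => L p.1 p.2) (c μ, μ)
  have hcomp : HasDerivAt (fun η => L (c η) η) (φ (deriv c μ, 1)) μ := by
    exact hL.hasFDerivAt.comp_hasDerivAt (f := fun η => (c η, η)) μ (hc.hasDerivAt.prodMk (hasDerivAt_id μ))
  have hpartial_x : HasFDerivAt (fun x => L x μ) (φ.comp (.inl ℝ E ℝ)) (c μ) := by
    exact hL.hasFDerivAt.comp (f := fun x => (x, μ)) (c μ) (hasFDerivAt_prodMk_left (c μ) μ)
  have hpartial_η : HasDerivAt (fun η => L (c μ) η) (φ (0, 1)) μ := by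
    exact hL.hasFDerivAt.comp_hasDerivAt (f := fun η => (c μ, η)) μ ((hasDerivAt_const μ (c μ)).prodMk (hasDerivAt_id μ))
  rw [hcomp.deriv, inner_gradient_left, hpartial_x.fderiv, hpartial_η.deriv,
    ContinuousLinearMap.comp_apply, ContinuousLinearMap.inl_apply, ← map_add,
    Prod.mk_add_mk, add_zero, zero_add]

lemma integral_sq_gaussianReal (m : ℝ) (v : NNReal) :
    ∫ x, x ^ 2 ∂gaussianReal m v = m ^ 2 + v := by
  have h := variance_eq_sub (memLp_id_gaussianReal (μ := m) (v := v) 2)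
  simp only [Pi.pow_apply, id_eq] at h
  rw [variance_id_gaussianReal, integral_id_gaussianReal] at h
  linarith

section SmoothedDerivative

variable {ν : Measure ℝ} [IsFiniteMeasure ν] {g : ℝ → ℝ} {μ D M : ℝ}

lemma abs_inv_mul_integral_mul_sub_le (hν : MemLp id 3 ν) (h1 : ∫ ε, ε ∂ν = 0)
    (h2 : ∫ ε, ε ^ 2 ∂ν = 1) (hg : Continuous g)
    (hrem : ∀ y, |g y - g μ - D * (y - μ)| ≤ M * (y - μ) ^ 2) {σ : ℝ} (hσ : 0 < σ) :
    |(1 / σ) * ∫ ε, g (μ + σ * ε) * ε ∂ν - D| ≤ M * σ * ∫ ε, |ε| ^ 3 ∂ν := by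
  have hi1 : Integrable (fun ε : ℝ => ε) ν := hν.integrable (by norm_num)
  have hi2 : Integrable (fun ε : ℝ => ε ^ 2) ν := (hν.mono_exponent (by norm_num)).integrable_sq
  have hi3 : Integrable (fun ε : ℝ => |ε| ^ 3) ν := by
    simpa only [Real.norm_eq_abs, id_eq] using hν.integrable_norm_pow' (p := 3)
  set r : ℝ → ℝ := fun ε => g (μ + σ * ε) - g μ - D * (σ * ε)
  have hr : ∀ ε, ‖r ε * ε‖ ≤ M * σ ^ 2 * |ε| ^ 3 := fun ε => by
    have h := hrem (μ + σ * ε)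
    rw [add_sub_cancel_left] at h
    rw [Real.norm_eq_abs, abs_mul]
    calc |r ε| * |ε| ≤ M * (σ * ε) ^ 2 * |ε| := by gcongr
      _ = M * σ ^ 2 * |ε| ^ 3 := by rw [mul_pow, ← sq_abs ε]; ring
  have hr_cont : Continuous fun ε => r ε * ε := by fun_prop
  have hri : Integrable (fun ε => r ε * ε) ν :=
    (hi3.const_mul _).mono' hr_cont.aestronglyMeasurable (ae_of_all _ hr)
  have hlin : Integrable (fun ε => g μ * ε + D * σ * ε ^ 2) ν :=
    (hi1.const_mul _).add (hi2.const_mul _)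
  have hsplit : ∫ ε, g (μ + σ * ε) * ε ∂ν = D * σ + ∫ ε, r ε * ε ∂ν := by
    calc ∫ ε, g (μ + σ * ε) * ε ∂ν = ∫ ε, (g μ * ε + D * σ * ε ^ 2 + r ε * ε) ∂ν := by
          congr with ε; simp only [r]; ring
      _ = g μ * ∫ ε, ε ∂ν + D * σ * ∫ ε, ε ^ 2 ∂ν + ∫ ε, r ε * ε ∂ν := by
          rw [integral_add hlin hri,
            integral_add (hi1.const_mul _) (hi2.const_mul _), integral_const_mul,
            integral_const_mul]
      _ = D * σ + ∫ ε, r ε * ε ∂ν := by rw [h1, h2]; ring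
  have hbound : |∫ ε, r ε * ε ∂ν| ≤ M * σ ^ 2 * ∫ ε, |ε| ^ 3 ∂ν := by
    simpa only [Real.norm_eq_abs, integral_const_mul] using
      norm_integral_le_of_norm_le (hi3.const_mul _) (ae_of_all _ hr)
  rw [hsplit, show (1 / σ) * (D * σ + ∫ ε, r ε * ε ∂ν) - D = (∫ ε, r ε * ε ∂ν) / σ by
    field_simp; ring, abs_div, abs_of_pos hσ, div_le_iff₀ hσ]
  linarith

theorem tendsto_inv_mul_integral_mul (hν : MemLp id 3 ν) (h1 : ∫ ε, ε ∂ν = 0)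
    (h2 : ∫ ε, ε ^ 2 ∂ν = 1) (hg : Continuous g)
    (hrem : ∀ y, |g y - g μ - D * (y - μ)| ≤ M * (y - μ) ^ 2) :
    Tendsto (fun σ => (1 / σ) * ∫ ε, g (μ + σ * ε) * ε ∂ν) (𝓝[>] 0) (𝓝 D) := by
  have hlin : Tendsto (fun σ => M * σ * ∫ ε, |ε| ^ 3 ∂ν) (𝓝[>] 0) (𝓝 0) := by
    have h : Continuous fun σ : ℝ => M * σ * ∫ ε, |ε| ^ 3 ∂ν := by fun_prop
    simpa using (h.tendsto 0).mono_left nhdsWithin_le_nhds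
  refine tendsto_sub_nhds_zero_iff.mp (squeeze_zero_norm' ?_ hlin)
  filter_upwards [self_mem_nhdsWithin] with σ hσ
  exact abs_inv_mul_integral_mul_sub_le hν h1 h2 hg hrem hσ

end SmoothedDerivative

/-- General form of Proposition 1 (before imposing that the meta-objective has no
explicit dependence on the meta-parameter): for fixed `ψ ∈ ℝⁿ`, continuously
differentiable `f : ℝ → ℝⁿ` and meta-objective `L : ℝⁿ × ℝ → ℝ` continuously
differentiable in both arguments, if the composite `g(η) = L(ψ + f(η), η)` is twice
differentiable with globally bounded second derivative, then
`lim_{σ→0⁺} (1/σ) ∫ g(μ + σε) ε dγ(ε) = ⟪∇_ψ L(ψ + f(μ), μ), f′(μ)⟫ + ∂_η L(ψ + f(μ), μ)`,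
where `γ` is the standard Gaussian measure on `ℝ`. -/
theorem oht_es_meta_gradient_limit_general (n : ℕ)
    (ψ : EuclideanSpace ℝ (Fin n)) (f : ℝ → EuclideanSpace ℝ (Fin n))
    (L : EuclideanSpace ℝ (Fin n) → ℝ → ℝ) (μ : ℝ)
    (hf : ContDiff ℝ 1 f)
    (hL : ContDiff ℝ 1 (fun p : EuclideanSpace ℝ (Fin n) × ℝ => L p.1 p.2))
    (g : ℝ → ℝ) (hg : g = fun η => L (ψ + f η) η)
    (hg1 : ∀ x : ℝ, DifferentiableAt ℝ g x)
    (hg2 : ∀ x : ℝ, DifferentiableAt ℝ (deriv g) x)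
    (M : ℝ) (hM : ∀ x : ℝ, |deriv (deriv g) x| ≤ M) :
    Filter.Tendsto
      (fun σ : ℝ => (1 / σ) * ∫ ε : ℝ, g (μ + σ * ε) * ε ∂(gaussianReal 0 1))
      (nhdsWithin 0 (Set.Ioi 0))
      (nhds (⟪gradient (fun x => L x μ) (ψ + f μ), deriv f μ⟫
              + deriv (fun η => L (ψ + f μ) η) μ)) := by
  have hchain : deriv g μ = ⟪gradient (fun x => L x μ) (ψ + f μ), deriv f μ⟫
      + deriv (fun η => L (ψ + f μ) η) μ := by
    rw [hg, deriv_comp_prodMk_eq_inner_gradient_add (c := fun η => ψ + f η)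
      (hL.differentiable one_ne_zero _) ((hf.differentiable one_ne_zero μ).const_add ψ),
      deriv_const_add]
  rw [← hchain]
  exact tendsto_inv_mul_integral_mul (memLp_id_gaussianReal 3) integral_id_gaussianReal
    (by simpa using integral_sq_gaussianReal 0 1)
    (Differentiable.continuous hg1)
    (abs_sub_sub_deriv_mul_le_of_abs_deriv_deriv_le hg1 hg2 hM μ)
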